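/- Uniform lower eigenvalue bound for the local polynomial Gram matrices: let the kernel K : ℝ² → [0,∞) have compact support in [−1,1]² and satisfy K_min 𝟙{−Δ ≤ u₁,u₂ ≤ Δ} ≤ K(u₁,u₂) ≤ K_max for constants Δ, K_min, K_max > 0, and let the design points satisfy Assumption 4. Then there exist a sufficiently large p₀ ∈ ℕ, a sufficiently small h₀ > 0, a sufficiently large constant c > 0 and a universal constant λ₀ > 0 such that for all p ≥ p₀, all h ∈ (c/p, h₀] and all x, y ∈ [0,1] with x ≤ y, the smallest eigenvalue of the symmetric positive semidefinite matrix B_{p,h}(x,y) := (ph)^{-2} Σ_{j<k} U_m((x_j−x)/h, (x_k−y)/h) U_m((x_j−x)/h, (x_k−y)/h)ᵀ K((x_j−x)/h, (x_k−y)/h) ∈ ℝ^{N_m×N_m} is bounded below by λ₀. -/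

import Mathlib

open Set

/-- The closed upper triangle `T = {(x,y) ∈ [0,1]² : x ≤ y}`. -/
def upperT : Set (ℝ × ℝ) :=
  {z | z.1 ∈ Set.Icc (0:ℝ) 1 ∧ z.2 ∈ Set.Icc (0:ℝ) 1 ∧ z.1 ≤ z.2}

/-- Sum over pairs `j < k` of design indices. -/
def pairSum {p : ℕ} (g : Fin p → Fin p → ℝ) : ℝ :=
  ∑ j : Fin p, ∑ k : Fin p, if j < k then g j k else 0

/-- Assumption 4 (design density). -/
def DesignQuantile {p : ℕ} (f : ℝ → ℝ) (fmin fmax : ℝ) (x : Fin p → ℝ) : Prop :=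
  0 < fmin ∧ fmin ≤ fmax ∧
  (∃ Kf : NNReal, LipschitzOnWith Kf f (Set.Icc 0 1)) ∧
  (∀ t ∈ Set.Icc (0:ℝ) 1, fmin ≤ f t ∧ f t ≤ fmax) ∧
  (∫ t in (0:ℝ)..1, f t) = 1 ∧
  ∀ j : Fin p, x j ∈ Set.Icc (0:ℝ) 1 ∧
    (∫ t in (0:ℝ)..(x j), f t) = ((j : ℝ) + 1 - 0.5) / p

/-- Index set of the monomials `u₁^{r₁}u₂^{r₂}/(r₁! r₂!)` of total degree `r₁ + r₂ ≤ m`;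
it has cardinality `N_m = (m+1)(m+2)/2`. -/
def MIdx (m : ℕ) := {q : Fin (m + 1) × Fin (m + 1) // (q.1 : ℕ) + (q.2 : ℕ) ≤ m}

instance (m : ℕ) : Fintype (MIdx m) := by unfold MIdx; infer_instance
instance (m : ℕ) : DecidableEq (MIdx m) := by unfold MIdx; infer_instance

/-- The entries of the vector `U_m(u₁,u₂)` of factorial-weighted monomials. -/
noncomputable def Umon (m : ℕ) (q : MIdx m) (u : ℝ × ℝ) : ℝ :=
  u.1 ^ (q.1.1 : ℕ) * u.2 ^ (q.1.2 : ℕ) /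
    (((q.1.1 : ℕ).factorial : ℝ) * ((q.1.2 : ℕ).factorial : ℝ))

/-- The Gram matrix `B_{p,h}(x,y)` of the restricted bivariate local polynomial estimator. -/
noncomputable def gramB {p : ℕ} (m : ℕ) (K : ℝ × ℝ → ℝ) (x : Fin p → ℝ) (h : ℝ)
    (z : ℝ × ℝ) : Matrix (MIdx m) (MIdx m) ℝ :=
  Matrix.of fun q r => (1 / ((p : ℝ) * h) ^ 2) * pairSum (fun j k =>
    Umon m q ((x j - z.1) / h, (x k - z.2) / h) *
      Umon m r ((x j - z.1) / h, (x k - z.2) / h) *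
        K ((x j - z.1) / h, (x k - z.2) / h))

/-!
On the box `[-Δ, Δ]²` the kernel is at least `K_min`, so it suffices to bound the sum over
pairs `j < k` whose rescaled position `((x_j - x)/h, (x_k - y)/h)` lies there. Assumption 4 puts
`r ≍ p h` design points into every interval of length `δ h`, which yields `m + 1` blocks of `r`
points around `x`, `δ h`-separated from each other, and likewise around `y`, all of the former
lying to the left of all of the latter. Picking one point from each block on both sides gives an
`(m + 1) × (m + 1)` grid of `δ`-separated nodes in `[-Δ, Δ]²`. A polynomial of degree at most `m`
in each variable that vanishes on such a grid is zero, so `v ↦ Σ (vᵀ U_m)²` over the grid is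
positive definite, uniformly in the grid by compactness. The `r²` grids obtained this way
contribute `≍ (p h)² λ ‖v‖²`, which cancels the normalisation `(p h)⁻²`.
-/
open Function

noncomputable def Upoly (m : ℕ) (v : MIdx m → ℝ) (u : ℝ × ℝ) : ℝ :=
  ∑ q, v q * Umon m q u

noncomputable def Ucoeff {m : ℕ} (v : MIdx m → ℝ) (a b : Fin (m + 1)) : ℝ :=
  if h : (a : ℕ) + b ≤ m then v ⟨(a, b), h⟩ / ((a : ℕ).factorial * (b : ℕ).factorial)
  else 0

lemma Upoly_eq_sum_pow (m : ℕ) (v : MIdx m → ℝ) (u : ℝ × ℝ) :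
    Upoly m v u =
      ∑ a : Fin (m + 1), ∑ b : Fin (m + 1), Ucoeff v a b * u.1 ^ (a : ℕ) * u.2 ^ (b : ℕ) := by
  rw [← Fintype.sum_prod_type',
    ← Finset.sum_filter_of_ne (p := fun q => (q.1 : ℕ) + q.2 ≤ m)
      (fun q _ hq => by by_contra h; simp [Ucoeff, h] at hq),
    Finset.sum_subtype (p := fun q : Fin (m + 1) × Fin (m + 1) => (q.1 : ℕ) + q.2 ≤ m) _
      (by simp)]
  refine Finset.sum_congr rfl fun ⟨⟨a, b⟩, hab⟩ _ => ?_
  simp only [Ucoeff, dif_pos hab, Umon]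
  ring

lemma Upoly_eq_zero_of_grid {m : ℕ} {v : MIdx m → ℝ} {t s : Fin (m + 1) → ℝ}
    (ht : Injective t) (hs : Injective s) (h : ∀ i i', Upoly m v (t i, s i') = 0) : v = 0 := by
  have hrow : ∀ a i', ∑ b, Ucoeff v a b * s i' ^ (b : ℕ) = 0 := fun a i' =>
    congrFun (Matrix.eq_zero_of_forall_index_sum_mul_pow_eq_zero
      (v := fun a => ∑ b, Ucoeff v a b * s i' ^ (b : ℕ)) ht fun i => by
      rw [← h i i', Upoly_eq_sum_pow]
      simp only [Finset.sum_mul]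
      exact Finset.sum_congr rfl fun a _ => Finset.sum_congr rfl fun b _ => by ring) a
  have hcoeff : ∀ a b, Ucoeff v a b = 0 := fun a =>
    congrFun (Matrix.eq_zero_of_forall_index_sum_mul_pow_eq_zero hs (hrow a))
  funext q
  have := hcoeff q.1.1 q.1.2
  simp only [Ucoeff, dif_pos q.2, div_eq_zero_iff] at this
  exact this.resolve_right (by positivity)

lemma Upoly_smul (m : ℕ) (c : ℝ) (v : MIdx m → ℝ) (u : ℝ × ℝ) :
    Upoly m (c • v) u = c * Upoly m v u := by
  simp only [Upoly, Pi.smul_apply, smul_eq_mul, Finset.mul_sum, mul_assoc]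

theorem IsCompact.exists_pos_mul_norm_sq_le {X E : Type*} [TopologicalSpace X]
    [NormedAddCommGroup E] [NormedSpace ℝ E] [ProperSpace E] {S : Set X} (hS : IsCompact S)
    {Q : X → E → ℝ} (hQ : Continuous (uncurry Q))
    (hsmul : ∀ x (c : ℝ) v, Q x (c • v) = c ^ 2 * Q x v) (hpos : ∀ x ∈ S, ∀ v ≠ 0, 0 < Q x v) :
    ∃ lam > 0, ∀ x ∈ S, ∀ v, lam * ‖v‖ ^ 2 ≤ Q x v := by
  obtain ⟨lam, hlam, hmin⟩ :
      ∃ lam > 0, ∀ y ∈ S ×ˢ Metric.sphere (0 : E) 1, lam ≤ Q y.1 y.2 := by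
    rcases (S ×ˢ Metric.sphere (0 : E) 1).eq_empty_or_nonempty with hempty | hne
    · exact ⟨1, one_pos, by simp [hempty]⟩
    obtain ⟨y, hy, hymin⟩ :=
      (hS.prod (isCompact_sphere 0 1)).exists_isMinOn hne hQ.continuousOn
    exact ⟨Q y.1 y.2, hpos _ hy.1 _ (ne_zero_of_mem_unit_sphere ⟨y.2, hy.2⟩),
      fun z hz => hymin hz⟩
  refine ⟨lam, hlam, fun x hx v => ?_⟩
  rcases eq_or_ne v 0 with rfl | hv
  · simpa using (hsmul x 0 0).ge
  have hunit := hmin (x, ‖v‖⁻¹ • v) ⟨hx, by simp [norm_smul, hv]⟩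
  rw [hsmul, inv_pow, ← div_eq_inv_mul, le_div_iff₀ (by positivity)] at hunit
  simpa [mul_comm] using hunit

lemma sum_sq_le_card_mul_norm_sq {ι : Type*} [Fintype ι] (v : ι → ℝ) :
    ∑ i, v i ^ 2 ≤ Fintype.card ι * ‖v‖ ^ 2 :=
  calc ∑ i, v i ^ 2 ≤ ∑ _i : ι, ‖v‖ ^ 2 := Finset.sum_le_sum fun i _ => by
        simpa only [Real.norm_eq_abs, sq_abs] using
          pow_le_pow_left₀ (norm_nonneg _) (norm_le_pi_norm v i) 2
    _ = Fintype.card ι * ‖v‖ ^ 2 := by simp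

def separatedNodes (n : ℕ) (Δ δ : ℝ) : Set (Fin n → ℝ) :=
  {t | (∀ i, t i ∈ Icc (-Δ) Δ) ∧ ∀ i i', i < i' → t i + δ ≤ t i'}

lemma isCompact_separatedNodes (n : ℕ) (Δ δ : ℝ) : IsCompact (separatedNodes n Δ δ) := by
  refine (isCompact_univ_pi fun _ => isCompact_Icc).of_isClosed_subset ?_
    fun t ht i _ => ht.1 i
  simp only [separatedNodes, ofPred_and, ofPred_forall]
  refine (isClosed_iInter fun i => isClosed_Icc.preimage (continuous_apply i)).inter
    (isClosed_iInter fun i => isClosed_iInter fun i' => ?_)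
  by_cases hii' : i < i'
  · simpa [hii'] using
      isClosed_le ((continuous_apply i).add continuous_const) (continuous_apply i')
  · simp [hii']

lemma strictMono_of_mem_separatedNodes {n : ℕ} {Δ δ : ℝ} (hδ : 0 < δ) {t : Fin n → ℝ}
    (ht : t ∈ separatedNodes n Δ δ) : StrictMono t :=
  fun i i' hii' => by linarith [ht.2 i i' hii']

lemma exists_pos_mul_sum_sq_le_grid (m : ℕ) (Δ : ℝ) {δ : ℝ} (hδ : 0 < δ) :
    ∃ lam > 0, ∀ t ∈ separatedNodes (m + 1) Δ δ, ∀ s ∈ separatedNodes (m + 1) Δ δ,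
      ∀ v : MIdx m → ℝ, lam * ∑ q, v q ^ 2 ≤ ∑ i, ∑ i', Upoly m v (t i, s i') ^ 2 := by
  have hnodes := isCompact_separatedNodes (m + 1) Δ δ
  obtain ⟨lam, hlam, hbound⟩ := (hnodes.prod hnodes).exists_pos_mul_norm_sq_le
    (Q := fun ts v => ∑ i, ∑ i', Upoly m v (ts.1 i, ts.2 i') ^ 2)
    (by simp only [Upoly, Umon]; fun_prop)
    (fun _ c v => by simp only [Upoly_smul, mul_pow, Finset.mul_sum])
    (fun ts hts v hv => by
      obtain ⟨i, i', hii'⟩ : ∃ i i', Upoly m v (ts.1 i, ts.2 i') ≠ 0 := by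
        by_contra! h
        exact hv (Upoly_eq_zero_of_grid (strictMono_of_mem_separatedNodes hδ hts.1).injective
          (strictMono_of_mem_separatedNodes hδ hts.2).injective h)
      exact Finset.sum_pos' (fun _ _ => Finset.sum_nonneg fun _ _ => sq_nonneg _)
        ⟨i, Finset.mem_univ _, Finset.sum_pos' (fun _ _ => sq_nonneg _)
          ⟨i', Finset.mem_univ _, by positivity⟩⟩)
  have hcard : (0 : ℝ) < Fintype.card (MIdx m) :=
    Nat.cast_pos.mpr (Fintype.card_pos_iff.mpr ⟨⟨(0, 0), by simp⟩⟩)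
  refine ⟨lam / Fintype.card (MIdx m), by positivity, fun t ht s hs v => ?_⟩
  calc lam / Fintype.card (MIdx m) * ∑ q, v q ^ 2
      ≤ lam / Fintype.card (MIdx m) * (Fintype.card (MIdx m) * ‖v‖ ^ 2) := by
        gcongr; exact sum_sq_le_card_mul_norm_sq v
    _ = lam * ‖v‖ ^ 2 := by field_simp
    _ ≤ _ := hbound (t, s) ⟨ht, hs⟩ v

def blockIcc (a w : ℝ) (i : ℕ) : Set ℝ := Icc (a + 2 * i * w) (a + 2 * i * w + w)

lemma rescale_mem_separatedNodes {n : ℕ} {Δ δ a z h : ℝ} {t : Fin (n + 1) → ℝ} (hδ : 0 ≤ δ)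
    (hh : 0 < h) (ht : ∀ i : Fin (n + 1), t i ∈ blockIcc a (δ * h) i)
    (hlo : z - Δ * h ≤ a) (hhi : a + (2 * n + 1) * (δ * h) ≤ z + Δ * h) :
    (fun i => (t i - z) / h) ∈ separatedNodes (n + 1) Δ δ := by
  have hδh : 0 ≤ δ * h := by positivity
  refine ⟨fun i => ⟨?_, ?_⟩, fun i i' hii' => ?_⟩
  · rw [le_div_iff₀ hh]
    nlinarith [(ht i).1, Nat.cast_nonneg (α := ℝ) i]
  · have hi : ((i : ℕ) : ℝ) ≤ n := by exact_mod_cast Fin.is_le i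
    rw [div_le_iff₀ hh]
    nlinarith [(ht i).2]
  · have hi : ((i : ℕ) : ℝ) + 1 ≤ (i' : ℕ) := by exact_mod_cast hii'
    rw [div_add' _ _ _ hh.ne', div_le_div_iff_of_pos_right hh]
    nlinarith [(ht i).2, (ht i').1]

lemma exists_block_bases {z : ℝ × ℝ} (hz : z ∈ upperT) {H : ℝ} (hH : 0 ≤ H) (hH1 : H ≤ 1) :
    ∃ α β : ℝ, 0 ≤ α ∧ z.1 - H ≤ α ∧ α ≤ z.1 ∧
      β ≤ 1 ∧ z.2 ≤ β ∧ β ≤ z.2 + H ∧ α + H ≤ β := by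
  obtain ⟨⟨hz1, -⟩, ⟨-, hz2⟩, hz12⟩ := hz
  refine ⟨max (z.1 - H) 0, min (z.2 + H) 1, le_max_right _ _, le_max_left _ _,
    max_le (by linarith) hz1, min_le_right _ _, le_min (by linarith) hz2, min_le_left _ _, ?_⟩
  rcases max_cases (z.1 - H) 0 with ⟨h1, -⟩ | ⟨h1, -⟩ <;>
    rcases min_cases (z.2 + H) 1 with ⟨h2, -⟩ | ⟨h2, -⟩ <;> rw [h1, h2] <;> linarith

noncomputable def designCdf (f : ℝ → ℝ) (a : ℝ) : ℝ := ∫ t in (0 : ℝ)..a, f t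

namespace DesignQuantile

variable {p : ℕ} {f : ℝ → ℝ} {fmin fmax : ℝ} {x : Fin p → ℝ}

lemma mem_Icc (hx : DesignQuantile f fmin fmax x) (j : Fin p) : x j ∈ Icc 0 1 :=
  (hx.2.2.2.2.2 j).1

lemma designCdf_apply (hx : DesignQuantile f fmin fmax x) (j : Fin p) :
    designCdf f (x j) = ((j : ℕ) + 1 / 2) / p := by
  rw [designCdf, (hx.2.2.2.2.2 j).2]
  congr 1
  ring

lemma designCdf_sub_ge (hx : DesignQuantile f fmin fmax x) {a b : ℝ} (ha : 0 ≤ a)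
    (hab : a ≤ b) (hb : b ≤ 1) : fmin * (b - a) ≤ designCdf f b - designCdf f a := by
  obtain ⟨-, -, ⟨L, hL⟩, hbound, -, -⟩ := hx
  have hint : ∀ c d, 0 ≤ c → c ≤ d → d ≤ 1 →
      IntervalIntegrable f MeasureTheory.volume c d := fun c d hc hcd hd =>
    (hL.continuousOn.mono (by rw [uIcc_of_le hcd]; exact Icc_subset_Icc hc hd)).intervalIntegrable
  rw [designCdf, designCdf, intervalIntegral.integral_interval_sub_left
    (hint 0 b le_rfl (ha.trans hab) hb) (hint 0 a le_rfl ha (hab.trans hb))]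
  calc fmin * (b - a) = ∫ _ in a..b, fmin := by simp [mul_comm]
    _ ≤ ∫ t in a..b, f t := intervalIntegral.integral_mono_on hab intervalIntegrable_const
        (hint a b ha hab hb) fun t ht => (hbound t ⟨ha.trans ht.1, ht.2.trans hb⟩).1

lemma strictMonoOn_designCdf (hx : DesignQuantile f fmin fmax x) :
    StrictMonoOn (designCdf f) (Icc 0 1) := fun a ha b hb hab => by
  have := hx.designCdf_sub_ge ha.1 hab.le hb.2
  nlinarith [hx.1]

lemma lt_of_lt (hx : DesignQuantile f fmin fmax x) {j k : Fin p} (hjk : x j < x k) : j < k := by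
  have hp : (0 : ℝ) < p := by exact_mod_cast j.pos
  have := hx.strictMonoOn_designCdf (hx.mem_Icc j) (hx.mem_Icc k) hjk
  rw [hx.designCdf_apply, hx.designCdf_apply, div_lt_div_iff_of_pos_right hp] at this
  exact_mod_cast (by linarith : ((j : ℕ) : ℝ) < (k : ℕ))

/-- The `r` consecutive design indices from `⌊p F(a) + 1/2⌋`, with `F = designCdf f`, all land
in `[a, a + w]` because `F` grows by at least `fmin * w` over that interval. -/
lemma exists_strictMono_mem_Icc (hx : DesignQuantile f fmin fmax x) {a w : ℝ} (ha : 0 ≤ a)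
    (hw : 0 ≤ w) (haw : a + w ≤ 1) {r : ℕ} (hr : (r : ℝ) ≤ p * fmin * w) :
    ∃ J : Fin r → Fin p, StrictMono J ∧ ∀ s, x (J s) ∈ Icc a (a + w) := by
  have hF0 : designCdf f 0 = 0 := intervalIntegral.integral_same
  have hF1 : designCdf f 1 = 1 := hx.2.2.2.2.1
  have hFa : 0 ≤ designCdf f a := by
    nlinarith [hx.designCdf_sub_ge le_rfl ha (by linarith), hx.1]
  have hFaw : fmin * w ≤ designCdf f (a + w) - designCdf f a := by
    simpa using hx.designCdf_sub_ge ha (le_add_of_nonneg_right hw) haw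
  have hFle : designCdf f (a + w) ≤ 1 := by
    nlinarith [hx.designCdf_sub_ge (ha.trans (le_add_of_nonneg_right hw)) haw le_rfl, hx.1]
  set n := ⌊p * designCdf f a + 1 / 2⌋₊
  have hn := Nat.lt_floor_add_one (p * designCdf f a + 1 / 2)
  have hn' : (n : ℝ) ≤ p * designCdf f a + 1 / 2 := Nat.floor_le (by positivity)
  have hidx : ∀ s : Fin r, p * designCdf f a ≤ ((n + s : ℕ) : ℝ) + 1 / 2 ∧
      ((n + s : ℕ) : ℝ) + 1 / 2 ≤ p * designCdf f (a + w) := fun s => by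
    have hs : ((s : ℕ) : ℝ) + 1 ≤ r := by exact_mod_cast s.2
    push_cast
    constructor <;> nlinarith [Nat.cast_nonneg (α := ℝ) s]
  have hlt : ∀ s : Fin r, n + s < p := fun s => by
    have : ((n + s : ℕ) : ℝ) + 1 / 2 ≤ p := (hidx s).2.trans (by nlinarith)
    exact_mod_cast (by linarith : ((n + s : ℕ) : ℝ) < p)
  refine ⟨fun s => ⟨n + s, hlt s⟩, fun s s' hss' => Fin.mk_lt_mk.mpr (by simpa using hss'),
    fun s => ?_⟩
  have hp : (0 : ℝ) < p := by exact_mod_cast (Nat.zero_le _).trans_lt (hlt s)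
  have hFx := hx.designCdf_apply ⟨n + s, hlt s⟩
  have hmono := hx.strictMonoOn_designCdf
  constructor
  · refine (hmono.le_iff_le ⟨ha, by linarith⟩ (hx.mem_Icc _)).mp ?_
    rw [hFx, le_div_iff₀ hp]
    linarith [(hidx s).1]
  · refine (hmono.le_iff_le (hx.mem_Icc _) ⟨by linarith, haw⟩).mp ?_
    rw [hFx, div_le_iff₀ hp]
    linarith [(hidx s).2]

lemma exists_injective_blocks (hx : DesignQuantile f fmin fmax x) {a w : ℝ} (ha : 0 ≤ a)
    (hw : 0 < w) {n r : ℕ} (hend : a + (2 * n + 1) * w ≤ 1) (hr : (r : ℝ) ≤ p * fmin * w) :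
    ∃ J : Fin r × Fin (n + 1) → Fin p, Injective J ∧
      ∀ (s : Fin r) (i : Fin (n + 1)), x (J (s, i)) ∈ blockIcc a w i := by
  have hblock : ∀ i : Fin (n + 1), ∃ J : Fin r → Fin p, StrictMono J ∧
      ∀ s, x (J s) ∈ blockIcc a w i := fun i => by
    have hi : ((i : ℕ) : ℝ) ≤ n := by exact_mod_cast Fin.is_le i
    exact hx.exists_strictMono_mem_Icc (by positivity) hw.le (by nlinarith) hr
  choose J hJmono hJmem using hblock
  refine ⟨fun si => J si.2 si.1, ?_, fun s i => hJmem i s⟩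
  have hsep : ∀ {i i' : Fin (n + 1)} (s s' : Fin r), i < i' → x (J i s) < x (J i' s') :=
    fun {i i'} s s' hii' => by
      have : ((i : ℕ) : ℝ) + 1 ≤ (i' : ℕ) := by exact_mod_cast hii'
      nlinarith [(hJmem i s).2, (hJmem i' s').1]
  rintro ⟨s, i⟩ ⟨s', i'⟩ (heq : J i s = J i' s')
  obtain rfl : i = i' := by
    by_contra hne
    rcases Ne.lt_or_gt hne with h | h
    · exact (hsep s s' h).ne (congrArg x heq)
    · exact (hsep s' s h).ne' (congrArg x heq)
  rw [(hJmono i).injective heq]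

lemma exists_separated_blocks (hx : DesignQuantile f fmin fmax x) {m r : ℕ} {Δ δ h : ℝ}
    {z : ℝ × ℝ} (hz : z ∈ upperT) (hδ : 0 < δ) (hδΔ : (4 * m + 2) * δ < Δ) (hh : 0 < h)
    (hΔh : Δ * h ≤ 1) (hr : (r : ℝ) ≤ p * fmin * (δ * h)) :
    ∃ J J' : Fin r × Fin (m + 1) → Fin p, Injective J ∧ Injective J' ∧ (∀ a b, J a < J' b) ∧
      (∀ s, (fun i => (x (J (s, i)) - z.1) / h) ∈ separatedNodes (m + 1) Δ δ) ∧
      (∀ s, (fun i => (x (J' (s, i)) - z.2) / h) ∈ separatedNodes (m + 1) Δ δ) := by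
  have hΔ : 0 < Δ := lt_of_le_of_lt (by positivity) hδΔ
  have hδh : 0 < δ * h := by positivity
  have hW : 2 * ((2 * m + 1) * (δ * h)) < Δ * h := by nlinarith
  obtain ⟨α, β, hα0, hαlo, hαz, hβ1, hβz, hβhi, hαβ⟩ :=
    exists_block_bases hz (by positivity) hΔh
  obtain ⟨J, hJ, hJmem⟩ := hx.exists_injective_blocks hα0 hδh (n := m) (by linarith) hr
  obtain ⟨J', hJ', hJ'mem⟩ := hx.exists_injective_blocks (a := β - (2 * m + 1) * (δ * h))
    (by linarith) hδh (n := m) (by linarith) hr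
  have hblock_le : ∀ i : Fin (m + 1),
      2 * (i : ℕ) * (δ * h) + δ * h ≤ (2 * m + 1) * (δ * h) := fun i => by
    have hi : ((i : ℕ) : ℝ) ≤ m := by exact_mod_cast Fin.is_le i
    nlinarith
  refine ⟨J, J', hJ, hJ', fun ⟨s, i⟩ ⟨s', i'⟩ => hx.lt_of_lt ?_,
    fun s => rescale_mem_separatedNodes (z := z.1) hδ.le hh (hJmem s) (by linarith)
      (by linarith),
    fun s => rescale_mem_separatedNodes (z := z.2) hδ.le hh (hJ'mem s) (by linarith)
      (by linarith)⟩
  nlinarith [(hJmem s i).2, (hJ'mem s' i').1, hblock_le i, Nat.cast_nonneg (α := ℝ) i']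

end DesignQuantile

lemma quadForm_gramB {p : ℕ} (m : ℕ) (K : ℝ × ℝ → ℝ) (x : Fin p → ℝ) (h : ℝ)
    (z : ℝ × ℝ) (v : MIdx m → ℝ) :
    ∑ q, ∑ q', v q * gramB m K x h z q q' * v q' = 1 / ((p : ℝ) * h) ^ 2 * pairSum (fun j k =>
      Upoly m v ((x j - z.1) / h, (x k - z.2) / h) ^ 2 *
        K ((x j - z.1) / h, (x k - z.2) / h)) := by
  simp only [gramB, Matrix.of_apply, pairSum, Finset.mul_sum, Finset.sum_mul,
    Finset.sum_comm (s := (Finset.univ : Finset (MIdx m))) (t := (Finset.univ : Finset (Fin p)))]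
  refine Finset.sum_congr rfl fun j _ => Finset.sum_congr rfl fun k _ => ?_
  split_ifs
  · simp only [Upoly, sq, Finset.mul_sum, Finset.sum_mul]
    exact Finset.sum_congr rfl fun q _ => Finset.sum_congr rfl fun q' _ => by ring
  · simp

lemma sum_le_pairSum {p : ℕ} {ι κ : Type*} [Fintype ι] [Fintype κ] {g : Fin p → Fin p → ℝ}
    (hg : ∀ j k, j < k → 0 ≤ g j k) {J : ι → Fin p} {J' : κ → Fin p} (hJ : Injective J)
    (hJ' : Injective J') (hlt : ∀ a b, J a < J' b) :
    ∑ a, ∑ b, g (J a) (J' b) ≤ pairSum g := by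
  classical
  calc ∑ a, ∑ b, g (J a) (J' b)
      = ∑ jk ∈ Finset.univ.image (Prod.map J J'), if jk.1 < jk.2 then g jk.1 jk.2 else 0 := by
        rw [Finset.sum_image fun _ _ _ _ h => hJ.prodMap hJ' h, ← Fintype.sum_prod_type']
        simp [hlt]
    _ ≤ ∑ jk : Fin p × Fin p, if jk.1 < jk.2 then g jk.1 jk.2 else 0 :=
        Finset.sum_le_univ_sum_of_nonneg fun jk => by
          split_ifs with h
          exacts [hg _ _ h, le_rfl]
    _ = pairSum g := Fintype.sum_prod_type _

lemma le_quadForm_gramB_of_blocks {p m r : ℕ} {K : ℝ × ℝ → ℝ} {Δ δ Kmin lam h : ℝ}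
    {x : Fin p → ℝ} {z : ℝ × ℝ} (hK0 : ∀ u, 0 ≤ K u)
    (hKmin : ∀ u : ℝ × ℝ, u.1 ∈ Icc (-Δ) Δ → u.2 ∈ Icc (-Δ) Δ → Kmin ≤ K u)
    (hKmin0 : 0 ≤ Kmin)
    (hgrid : ∀ t ∈ separatedNodes (m + 1) Δ δ, ∀ s ∈ separatedNodes (m + 1) Δ δ,
      ∀ v : MIdx m → ℝ, lam * ∑ q, v q ^ 2 ≤ ∑ i, ∑ i', Upoly m v (t i, s i') ^ 2)
    {J J' : Fin r × Fin (m + 1) → Fin p} (hJ : Injective J)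
    (hJ' : Injective J') (hlt : ∀ a b, J a < J' b)
    (hT : ∀ s, (fun i => (x (J (s, i)) - z.1) / h) ∈ separatedNodes (m + 1) Δ δ)
    (hS : ∀ s, (fun i => (x (J' (s, i)) - z.2) / h) ∈ separatedNodes (m + 1) Δ δ)
    (v : MIdx m → ℝ) :
    (r / ((p : ℝ) * h)) ^ 2 * (Kmin * (lam * ∑ q, v q ^ 2)) ≤
      ∑ q, ∑ q', v q * gramB m K x h z q q' * v q' := by
  rw [quadForm_gramB]
  set T : Fin p → ℝ := fun j => (x j - z.1) / h
  set S : Fin p → ℝ := fun k => (x k - z.2) / h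
  set C := 1 / ((p : ℝ) * h) ^ 2
  calc (r / ((p : ℝ) * h)) ^ 2 * (Kmin * (lam * ∑ q, v q ^ 2))
      = C * ∑ _s : Fin r, ∑ _s' : Fin r, Kmin * (lam * ∑ q, v q ^ 2) := by
        simp only [C, Finset.sum_const, Finset.card_univ, Fintype.card_fin, nsmul_eq_mul]
        ring
    _ ≤ C * ∑ s, ∑ s', Kmin * ∑ i, ∑ i', Upoly m v (T (J (s, i)), S (J' (s', i'))) ^ 2 := by
        gcongr with s _ s' _
        exact hgrid _ (hT s) _ (hS s') v
    _ = C * ∑ a, ∑ b, Kmin * Upoly m v (T (J a), S (J' b)) ^ 2 := by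
        congr 1
        simp only [Fintype.sum_prod_type, Finset.mul_sum]
        exact Finset.sum_congr rfl fun s _ => Finset.sum_comm
    _ ≤ C * ∑ a, ∑ b, Upoly m v (T (J a), S (J' b)) ^ 2 * K (T (J a), S (J' b)) := by
        gcongr C * ?_
        refine Finset.sum_le_sum fun a _ => Finset.sum_le_sum fun b _ => ?_
        rw [mul_comm]
        exact mul_le_mul_of_nonneg_left (hKmin _ ((hT a.1).1 a.2) ((hS b.1).1 b.2)) (sq_nonneg _)
    _ ≤ _ := mul_le_mul_of_nonneg_left
        (sum_le_pairSum (g := fun j k => Upoly m v (T j, S k) ^ 2 * K (T j, S k))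
          (fun j k _ => mul_nonneg (sq_nonneg _) (hK0 _)) hJ hJ' hlt) (by positivity)

lemma half_le_natFloor {X : ℝ} (hX : 1 ≤ X) : X / 2 ≤ ⌊X⌋₊ := by
  have h1 : (1 : ℝ) ≤ ⌊X⌋₊ := by exact_mod_cast Nat.le_floor (by simpa using hX)
  linarith [Nat.lt_floor_add_one X]

theorem gram_matrix_eigenvalue_lower_bound_general
    (m : ℕ) (K : ℝ × ℝ → ℝ) (Δ Kmin Kmax : ℝ)
    (hΔ : 0 < Δ) (hKmin : 0 < Kmin)
    (hK0 : ∀ u, 0 ≤ K u)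
    (hKbd : ∀ u : ℝ × ℝ, K u ≤ Kmax ∧
      (u.1 ∈ Set.Icc (-Δ) Δ → u.2 ∈ Set.Icc (-Δ) Δ → Kmin ≤ K u))
    (f : ℝ → ℝ) (fmin fmax : ℝ) :
    ∃ (p₀ : ℕ) (h₀ c lam₀ : ℝ), 0 < h₀ ∧ 0 < c ∧ 0 < lam₀ ∧
      ∀ (p : ℕ), p₀ ≤ p → ∀ x : Fin p → ℝ, DesignQuantile f fmin fmax x →
      ∀ h ∈ Set.Ioc (c / p) h₀, ∀ z ∈ upperT, ∀ v : MIdx m → ℝ,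
        lam₀ * ∑ q, v q ^ 2 ≤ ∑ q, ∑ r, v q * gramB m K x h z q r * v r := by
  rcases le_or_gt fmin 0 with hf | hf
  · exact ⟨0, 1, 1, 1, one_pos, one_pos, one_pos, fun p _ x hx => absurd hx.1 hf.not_gt⟩
  set δ := Δ / (4 * (m + 1))
  have hδ : 0 < δ := by positivity
  have hδΔ : (4 * m + 2) * δ < Δ := by
    rw [mul_div_assoc', div_lt_iff₀ (by positivity)]
    nlinarith
  obtain ⟨lam, hlam, hgrid⟩ := exists_pos_mul_sum_sq_le_grid m Δ hδ
  refine ⟨1, 1 / Δ, 1 / (fmin * δ), (fmin * δ / 2) ^ 2 * (Kmin * lam), by positivity,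
    by positivity, by positivity, fun p hp x hx h hh z hz v => ?_⟩
  have hh0 : 0 < h := lt_of_le_of_lt (by positivity) hh.1
  have hX : 1 ≤ fmin * δ * (p * h) := by
    have := hh.1
    rw [div_div, div_lt_iff₀ (by positivity)] at this
    linarith
  set r := ⌊fmin * δ * (p * h)⌋₊
  obtain ⟨J, J', hJ, hJ', hlt, hT, hS⟩ := hx.exists_separated_blocks (r := r) hz hδ hδΔ hh0
    (by rw [← le_div_iff₀' hΔ]; exact hh.2) (by nlinarith [Nat.floor_le (zero_le_one.trans hX)])
  calc (fmin * δ / 2) ^ 2 * (Kmin * lam) * ∑ q, v q ^ 2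
      ≤ (r / ((p : ℝ) * h)) ^ 2 * (Kmin * (lam * ∑ q, v q ^ 2)) := by
        rw [mul_assoc, mul_assoc Kmin]
        gcongr ?_ ^ 2 * _
        rw [le_div_iff₀ (by positivity)]
        linarith [half_le_natFloor hX]
    _ ≤ _ := le_quadForm_gramB_of_blocks hK0 (fun u => (hKbd u).2) hKmin.le hgrid hJ hJ' hlt hT hS v

/-- **Uniform lower eigenvalue bound for the local polynomial Gram matrices (Lemma 9).**
Let the kernel `K ≥ 0` have compact support in `[−1,1]²` and satisfy
`K_min 𝟙{−Δ ≤ u₁,u₂ ≤ Δ} ≤ K ≤ K_max`, and let the design satisfy Assumption 4.  Then there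
are `p₀ ∈ ℕ`, `h₀ > 0`, `c > 0` and a universal `λ₀ > 0` such that for all `p ≥ p₀`,
`h ∈ (c/p, h₀]` and `(x,y) ∈ T`, the smallest eigenvalue of the symmetric positive
semidefinite matrix `B_{p,h}(x,y)` is bounded below by `λ₀` (expressed here through the
quadratic form: `λ₀ ‖v‖² ≤ vᵀ B_{p,h}(x,y) v` for all `v`). -/
theorem gram_matrix_eigenvalue_lower_bound
    (m : ℕ) (K : ℝ × ℝ → ℝ) (Δ Kmin Kmax : ℝ)
    (hΔ : 0 < Δ) (hKmin : 0 < Kmin) (hKmax : 0 < Kmax)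
    (hK0 : ∀ u, 0 ≤ K u)
    (hKsupp : ∀ u : ℝ × ℝ, ¬(|u.1| ≤ 1 ∧ |u.2| ≤ 1) → K u = 0)
    (hKbd : ∀ u : ℝ × ℝ, K u ≤ Kmax ∧
      (u.1 ∈ Set.Icc (-Δ) Δ → u.2 ∈ Set.Icc (-Δ) Δ → Kmin ≤ K u))
    (f : ℝ → ℝ) (fmin fmax : ℝ) :
    ∃ (p₀ : ℕ) (h₀ c lam₀ : ℝ), 0 < h₀ ∧ 0 < c ∧ 0 < lam₀ ∧
      ∀ (p : ℕ), p₀ ≤ p → ∀ x : Fin p → ℝ, DesignQuantile f fmin fmax x →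
      ∀ h ∈ Set.Ioc (c / p) h₀, ∀ z ∈ upperT, ∀ v : MIdx m → ℝ,
        lam₀ * ∑ q, v q ^ 2 ≤ ∑ q, ∑ r, v q * gramB m K x h z q r * v r :=
  gram_matrix_eigenvalue_lower_bound_general m K Δ Kmin Kmax hΔ hKmin hK0 hKbd f fmin fmax
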